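/- arXiv:1610.00807 — 4 statements merged into one kernel-verified Lean document; each statement's English description precedes it below -/
import Mathlib

section
/- Let K/ℚ be a finite Galois extension of degree D, c ∈ ℚ, d ≥ 2, and let (z₀, …, z_{N−1}) be a cycle of exact period N > 1 of φ(z) = z^d + c contained in K. Suppose τ ∈ Gal(K/ℚ) and j ∈ {1, …, N−1} satisfy τ(z₀) = φ^j(z₀). Then N divides j·D, and hence j is a multiple of N / gcd(N, D). -/
/-!
Write `φ(z) = z^d + c` and `z₀, …, z_{N-1}` for the cycle. Since `c` is rational, `τ` commutes
with `φ`, so `τ(z₀) = z_j` forces `τ(z_m) = z_{m+j}` for every `m`, and hence `τ^k(z₀) = z_{kj}`.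
As `τ^D = 1` in the Galois group of order `D`, we get `z_{Dj} = z₀`, i.e. `N ∣ jD` because the
cycle has exact period `N`. Dividing out `gcd(N, D)` gives `N / gcd(N, D) ∣ j`.
-/

namespace ZModCycle

variable {α : Type*} {N : ℕ} {f g : α → α} {z : ZMod N → α}

theorem iterate_apply (hz : ∀ k, f (z k) = z (k + 1)) (n : ℕ) (m : ZMod N) :
    f^[n] (z m) = z (m + n) := by
  induction n with
  | zero => simp
  | succ n ih => rw [Function.iterate_succ_apply', ih, hz, Nat.cast_succ, add_assoc]

theorem apply_eq_of_commute [NeZero N] (hz : ∀ k, f (z k) = z (k + 1))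
    (hgf : Function.Commute g f) {j : ZMod N} (hj : g (z 0) = z j) (m : ZMod N) :
    g (z m) = z (m + j) := by
  have hm : z m = f^[m.val] (z 0) := by rw [iterate_apply hz, zero_add, ZMod.natCast_zmod_val]
  rw [hm, (hgf.iterate_right m.val).eq, hj, iterate_apply hz, ZMod.natCast_zmod_val, add_comm]

theorem iterate_apply_of_commute [NeZero N] (hz : ∀ k, f (z k) = z (k + 1))
    (hgf : Function.Commute g f) {j : ZMod N} (hj : g (z 0) = z j) (k : ℕ) :
    g^[k] (z 0) = z (k * j) := by
  induction k with
  | zero => simp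
  | succ k ih =>
    rw [Function.iterate_succ_apply', ih, apply_eq_of_commute hz hgf hj, Nat.cast_succ,
      add_one_mul]

end ZModCycle

theorem AlgEquiv.commute_pow_add_algebraMap {R A : Type*} [CommSemiring R] [Semiring A]
    [Algebra R A] (τ : A ≃ₐ[R] A) (d : ℕ) (c : R) :
    Function.Commute τ (fun w : A => w ^ d + algebraMap R A c) := fun w => by
  simp only [map_add, map_pow, AlgEquiv.commutes]

theorem IsGalois.pow_finrank_eq_one (K L : Type*) [Field K] [Field L] [Algebra K L]
    [FiniteDimensional K L] [IsGalois K L] (τ : L ≃ₐ[K] L) :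
    τ ^ Module.finrank K L = 1 := by
  rw [← IsGalois.card_aut_eq_finrank K L]
  exact pow_card_eq_one'

theorem Nat.div_gcd_dvd_of_dvd_mul {N D j : ℕ} (hN : N ≠ 0) (h : N ∣ j * D) :
    N / N.gcd D ∣ j := by
  have hg : N.gcd D ∣ N := Nat.gcd_dvd_left N D
  rw [Nat.div_dvd_iff_dvd_mul hg (Nat.gcd_pos_of_pos_left D (Nat.pos_of_ne_zero hN)),
    Nat.gcd_comm, ← Nat.gcd_mul_right, mul_comm D]
  exact Nat.dvd_gcd h (Nat.dvd_mul_right N j)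

theorem stmt_3_general (K : Type*) [Field K] [CharZero K] [FiniteDimensional ℚ K]
    [IsGalois ℚ K] (D : ℕ) (hD : D = Module.finrank ℚ K)
    (d : ℕ) (c : ℚ) (N : ℕ) [NeZero N]
    (z : ZMod N → K)
    (hcycle : ∀ k : ZMod N, (z k) ^ d + (c : K) = z (k + 1))
    (hdist : Function.Injective z)
    (τ : K ≃ₐ[ℚ] K) (j : ℕ)
    (hτ : τ (z 0) = (fun w : K => w ^ d + (c : K))^[j] (z 0)) :
    N ∣ j * D ∧ (N / Nat.gcd N D) ∣ j := by
  have hcomm := τ.commute_pow_add_algebraMap d c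
  rw [ZModCycle.iterate_apply hcycle, zero_add] at hτ
  have hτD : τ^[D] (z 0) = z (D * j) := ZModCycle.iterate_apply_of_commute hcycle hcomm hτ D
  rw [← AlgEquiv.coe_pow, hD, IsGalois.pow_finrank_eq_one, AlgEquiv.one_apply, ← hD,
    ← Nat.cast_mul] at hτD
  have hdvd : N ∣ j * D := by
    rw [mul_comm, ← ZMod.natCast_eq_zero_iff]
    exact (hdist hτD).symm
  exact ⟨hdvd, Nat.div_gcd_dvd_of_dvd_mul (NeZero.ne N) hdvd⟩

/-- If τ ∈ Gal(K/ℚ) satisfies τ(z₀) = φ^j(z₀) on a cycle of exact period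
N > 1 of φ(z) = z^d + c, with K/ℚ Galois of degree D, then N ∣ j·D and
hence N / gcd(N, D) divides j. -/
theorem stmt_3 (K : Type*) [Field K] [CharZero K] [FiniteDimensional ℚ K]
    [IsGalois ℚ K] (D : ℕ) (hD : D = Module.finrank ℚ K)
    (d : ℕ) (hd : 2 ≤ d) (c : ℚ) (N : ℕ) (hN : 1 < N) [NeZero N]
    (z : ZMod N → K)
    (hcycle : ∀ k : ZMod N, (z k) ^ d + (c : K) = z (k + 1))
    (hdist : Function.Injective z)
    (τ : K ≃ₐ[ℚ] K) (j : ℕ) (hj : 1 ≤ j ∧ j < N)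
    (hτ : τ (z 0) = (fun w : K => w ^ d + (c : K))^[j] (z 0)) :
    N ∣ j * D ∧ (N / Nat.gcd N D) ∣ j :=
  stmt_3_general K D hD d c N z hcycle hdist τ j hτ
end

section
/- Let K/ℚ be a quadratic field extension, c ∈ ℚ, d ≥ 2, and let (z₀, …, z_{N−1}) ⊆ K be a cycle of exact period N of φ(z) = z^d + c. Suppose there exist 0 < i < N and a nontrivial σ ∈ Gal(K/ℚ) with φ^i(z₀) = σ(z₀). Then the trace of the cycle, z₀ + z₁ + ⋯ + z_{N−1}, is a rational number. -/
/-!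
The hypothesis φ^i(z₀) = σ(z₀) makes σ shift the cycle: σ commutes with φ because c is
rational, so σ(z_k) = σ(φ^k(z₀)) = φ^k(σ z₀) = φ^(k+i)(z₀) = z_{k+i}. Hence σ permutes the
terms of the trace, which is therefore fixed by σ. In a quadratic extension a nontrivial
automorphism fixes only the base field.
-/

open IntermediateField

theorem IntermediateField.mem_bot_of_algEquiv_apply_eq_self {F K : Type*} [Field F] [Field K]
    [Algebra F K] (hp : (Module.finrank F K).Prime) {σ : K ≃ₐ[F] K} (hσ : σ ≠ 1) {x : K}
    (hx : σ x = x) : x ∈ (⊥ : IntermediateField F K) := by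
  have : FiniteDimensional F K := Module.finite_of_finrank_pos hp.pos
  have := isSimpleOrder_of_finrank_prime F K hp
  rcases IsSimpleOrder.eq_bot_or_eq_top F⟮x⟯ with hbot | htop
  · exact adjoin_simple_eq_bot_iff.mp hbot
  · refine absurd (AlgEquiv.coe_toAlgHom_injective ?_) hσ
    have hgen : Algebra.adjoin F {x} = ⊤ :=
      (adjoin_simple_eq_top_iff_of_isAlgebraic (Algebra.IsAlgebraic.isAlgebraic x)).mp htop
    exact AlgHom.ext_of_adjoin_eq_top hgen (by simpa using hx)

section Cycle

variable {α : Type*} {N : ℕ} {f : α → α} {z : ZMod N → α}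

theorem iterate_apply_of_cycle (hz : ∀ k, f (z k) = z (k + 1)) (n : ℕ) (k : ZMod N) :
    f^[n] (z k) = z (k + n) := by
  induction n with
  | zero => simp
  | succ n ih => rw [Function.iterate_succ_apply', ih, hz, Nat.cast_succ, add_assoc]

theorem apply_cycle_of_commute [NeZero N] (hz : ∀ k, f (z k) = z (k + 1)) {g : α → α}
    (hgf : Function.Commute g f) {j : ZMod N} (hj : g (z 0) = z j) (k : ZMod N) :
    g (z k) = z (k + j) := by
  have hk : z k = f^[k.val] (z 0) := by
    rw [iterate_apply_of_cycle hz, zero_add, ZMod.natCast_zmod_val]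
  rw [hk, (hgf.iterate_right k.val).eq, hj, iterate_apply_of_cycle hz, ZMod.natCast_zmod_val,
    add_comm]

end Cycle

theorem stmt_4_general (K : Type*) [Field K] [CharZero K]
    (hquad : Module.finrank ℚ K = 2)
    (d : ℕ) (c : ℚ) (N : ℕ) [NeZero N]
    (z : ZMod N → K)
    (hcycle : ∀ k : ZMod N, (z k) ^ d + (c : K) = z (k + 1))
    (i : ℕ) (σ : K ≃ₐ[ℚ] K) (hσ : σ ≠ 1)
    (hA : (fun w : K => w ^ d + (c : K))^[i] (z 0) = σ (z 0)) :
    ∃ q : ℚ, (∑ k : ZMod N, z k) = (q : K) := by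
  set φ : K → K := fun w => w ^ d + (c : K)
  have hcomm : Function.Commute σ φ := fun w => by simp [φ]
  have hshift : ∀ k, σ (z k) = z (k + i) :=
    apply_cycle_of_commute hcycle hcomm (by rw [← hA, iterate_apply_of_cycle hcycle, zero_add])
  have hfix : σ (∑ k, z k) = ∑ k, z k := by
    rw [map_sum]
    simp only [hshift]
    exact Equiv.sum_comp (Equiv.addRight _) z
  obtain ⟨q, hq⟩ := mem_bot.mp
    (mem_bot_of_algEquiv_apply_eq_self (hquad ▸ Nat.prime_two) hσ hfix)
  exact ⟨q, by rw [← hq, eq_ratCast]⟩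

/-- For a quadratic field K and a cycle of exact period N of φ(z) = z^d + c
satisfying Property A, the trace of the cycle is rational. -/
theorem stmt_4 (K : Type*) [Field K] [CharZero K]
    (hquad : Module.finrank ℚ K = 2)
    (d : ℕ) (hd : 2 ≤ d) (c : ℚ) (N : ℕ) (hN : 0 < N) [NeZero N]
    (z : ZMod N → K)
    (hcycle : ∀ k : ZMod N, (z k) ^ d + (c : K) = z (k + 1))
    (hdist : Function.Injective z)
    (i : ℕ) (hi : 0 < i ∧ i < N) (σ : K ≃ₐ[ℚ] K) (hσ : σ ≠ 1)
    (hA : (fun w : K => w ^ d + (c : K))^[i] (z 0) = σ (z 0)) :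
    ∃ q : ℚ, (∑ k : ZMod N, z k) = (q : K) :=
  stmt_4_general K hquad d c N z hcycle i σ hσ hA
end

section
/- Let K/ℚ be a finite Galois extension of degree D, c ∈ ℚ, d ≥ 2, and (z₀, …, z_{N−1}) ⊆ K \ ℚ a cycle of exact period N > 1 of φ(z) = z^d + c. Then Property A holds for this cycle (i.e., there exist 0 < i < N and nontrivial τ ∈ Gal(K/ℚ) with φ^i(z₀) = τ(z₀)) if and only if there exist a nonzero m ∈ ℤ/gcd(N,D)ℤ and a nontrivial τ ∈ Gal(K/ℚ) such that φ^{mN/gcd(N,D)}(z₀) = τ(z₀). -/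
/-- Appendix proposition: for a cycle of exact period N > 1 of φ(z) = z^d + c
in K \ ℚ with K/ℚ Galois of degree D, Property A holds if and only if there
is a nonzero residue m modulo gcd(N, D) and a nontrivial τ ∈ Gal(K/ℚ) with
φ^{mN/gcd(N,D)}(z₀) = τ(z₀). -/
theorem stmt_13 (K : Type*) [Field K] [CharZero K] [FiniteDimensional ℚ K]
    [IsGalois ℚ K] (D : ℕ) (hD : D = Module.finrank ℚ K)
    (d : ℕ) (hd : 2 ≤ d) (c : ℚ) (N : ℕ) (hN : 1 < N) [NeZero N]
    (z : ZMod N → K)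
    (hcycle : ∀ k : ZMod N, (z k) ^ d + (c : K) = z (k + 1))
    (hdist : Function.Injective z)
    (hirr : ∀ (k : ZMod N) (q : ℚ), z k ≠ (q : K)) :
    (∃ i : ℕ, 0 < i ∧ i < N ∧ ∃ τ : K ≃ₐ[ℚ] K, τ ≠ 1 ∧
        (fun w : K => w ^ d + (c : K))^[i] (z 0) = τ (z 0)) ↔
      (∃ m : ℕ, 0 < m ∧ m < Nat.gcd N D ∧ ∃ τ : K ≃ₐ[ℚ] K, τ ≠ 1 ∧
        (fun w : K => w ^ d + (c : K))^[m * (N / Nat.gcd N D)] (z 0)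
          = τ (z 0)) := by
  set g := Nat.gcd N D with hg
  have hNpos : 0 < N := by omega
  have hgpos : 0 < g := Nat.gcd_pos_of_pos_left D hNpos
  have hNg : 0 < N / g := Nat.div_pos (Nat.le_of_dvd hNpos (Nat.gcd_dvd_left N D)) hgpos
  constructor
  · rintro ⟨i, hi0, hiN, τ, hτ, heq⟩
    -- iterating φ walks along the cycle
    have hiter : ∀ (n : ℕ) (k : ZMod N),
        (fun w : K => w ^ d + (c : K))^[n] (z k) = z (k + (n : ZMod N)) := by
      intro n
      induction n with
      | zero => intro k; simp
      | succ n ih =>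
        intro k
        rw [Function.iterate_succ_apply', ih]
        have := hcycle (k + (n : ZMod N))
        rw [this]
        push_cast
        ring_nf
    -- τ acts by shift by i
    have hτz : ∀ n : ℕ, τ (z (n : ZMod N)) = z ((n : ZMod N) + (i : ZMod N)) := by
      intro n
      induction n with
      | zero =>
        have h0 := hiter i 0
        simp only [Nat.cast_zero] at h0 ⊢
        rw [← heq, h0, zero_add]
      | succ n ih =>
        have hc := hcycle (n : ZMod N)
        have hc2 := hcycle ((n : ZMod N) + (i : ZMod N))
        have : τ (z ((n : ZMod N) + 1)) = τ (z (n : ZMod N)) ^ d + (c : K) := by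
          rw [← hc, map_add, map_pow, map_ratCast]
        push_cast
        rw [this, ih, hc2]
        ring_nf
    have hpow : ∀ j : ℕ, (τ ^ j) (z 0) = z ((j * i : ℕ) : ZMod N) := by
      intro j
      induction j with
      | zero => simp
      | succ j ih =>
        rw [pow_succ', AlgEquiv.mul_apply, ih]
        have := hτz (j * i)
        rw [this]
        push_cast
        ring_nf
    have hcard : Fintype.card (K ≃ₐ[ℚ] K) = D := by
      rw [hD, ← Nat.card_eq_fintype_card]; exact IsGalois.card_aut_eq_finrank ℚ K
    have hτD : τ ^ D = 1 := by rw [← hcard]; exact pow_card_eq_one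
    have hzD : z ((D * i : ℕ) : ZMod N) = z 0 := by
      rw [← hpow D, hτD]; rfl
    have hdvd : N ∣ D * i := by
      have := hdist hzD
      rwa [ZMod.natCast_eq_zero_iff] at this
    have h1 : N / g ∣ (D / g) * i := by
      have h2 : g * (N / g) ∣ g * ((D / g) * i) := by
        rw [Nat.mul_div_cancel' (Nat.gcd_dvd_left N D), ← mul_assoc,
          Nat.mul_div_cancel' (Nat.gcd_dvd_right N D)]
        exact hdvd
      exact (Nat.mul_dvd_mul_iff_left hgpos).mp h2
    have hcop : Nat.Coprime (N / g) (D / g) := Nat.coprime_div_gcd_div_gcd hgpos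
    have h3 : N / g ∣ i := by
      rcases h1 with ⟨t, ht⟩
      exact (Nat.Coprime.dvd_of_dvd_mul_left hcop ⟨t, by linarith [ht]⟩)
    obtain ⟨m, hm⟩ := h3
    have hm0 : 0 < m := by
      rcases Nat.eq_zero_or_pos m with h | h
      · simp [h] at hm; omega
      · exact h
    have hmg : m < g := by
      by_contra h
      push_neg at h
      have : N ≤ i := by
        calc N = N / g * g := (Nat.div_mul_cancel (Nat.gcd_dvd_left N D)).symm
        _ ≤ N / g * m := Nat.mul_le_mul_left _ h
        _ = i := hm.symm
      omega
    exact ⟨m, hm0, hmg, τ, hτ, by rw [mul_comm m (N / g), ← hm]; exact heq⟩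
  · rintro ⟨m, hm0, hmg, τ, hτ, heq⟩
    refine ⟨m * (N / g), Nat.mul_pos hm0 hNg, ?_, τ, hτ, heq⟩
    calc m * (N / g) < g * (N / g) := (Nat.mul_lt_mul_right hNg).mpr hmg
    _ = N := Nat.mul_div_cancel' (Nat.gcd_dvd_left N D)
end

section
/- Let K be a quadratic number field with nontrivial automorphism σ, and let c ∈ ℚ. Suppose z₀ ∈ K has exact period 2 under φ(z) = z² + c (i.e., φ(φ(z₀)) = z₀ and φ(z₀) ≠ z₀). Then either z₀ ∈ ℚ, or φ(z₀) = σ(z₀). -/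
/-- For a quadratic number field K with nontrivial automorphism σ and c ∈ ℚ,
any point z₀ ∈ K of exact period 2 under φ(z) = z² + c is rational or
satisfies φ(z₀) = σ(z₀). -/
theorem stmt_14 (K : Type*) [Field K] [CharZero K]
    (hquad : Module.finrank ℚ K = 2)
    (σ : K ≃ₐ[ℚ] K) (hσ : σ ≠ 1) (c : ℚ) (z₀ : K)
    (hper : (z₀ ^ 2 + (c : K)) ^ 2 + (c : K) = z₀)
    (hnotfix : z₀ ^ 2 + (c : K) ≠ z₀) :
    (∃ q : ℚ, z₀ = (q : K)) ∨ z₀ ^ 2 + (c : K) = σ z₀ := by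
  -- factor: ((z²+c)²+c - z) = (z²+c-z)(z²+z+c+1)
  have hfac : (z₀ ^ 2 + (c : K) - z₀) * (z₀ ^ 2 + z₀ + (c : K) + 1) = 0 := by
    linear_combination hper
  have h : z₀ ^ 2 + z₀ + (c : K) + 1 = 0 := by
    rcases mul_eq_zero.mp hfac with h' | h'
    · exact absurd (by linear_combination h') hnotfix
    · exact h'
  -- σ z₀ satisfies the same quadratic
  have hσz : (σ z₀) ^ 2 + σ z₀ + (c : K) + 1 = 0 := by
    have := congrArg σ h
    simpa [map_add, map_pow, map_one] using this
  have hfac2 : (σ z₀ - z₀) * (σ z₀ + z₀ + 1) = 0 := by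
    linear_combination hσz - h
  rcases mul_eq_zero.mp hfac2 with h1 | h2
  · -- σ z₀ = z₀ ⇒ z₀ is rational (else σ = 1)
    left
    have hz : σ z₀ = z₀ := sub_eq_zero.mp h1
    by_contra hq
    push_neg at hq
    have li : LinearIndependent ℚ ![z₀, 1] := by
      rw [LinearIndependent.pair_iff]
      intro s t hst
      by_contra hc
      push_neg at hc
      have hs : s ≠ 0 := by
        rintro rfl
        simp only [zero_smul, zero_add] at hst
        have : (t : K) = 0 := by
          rw [← hst]; simp [Rat.smul_def]
        exact hc rfl (by exact_mod_cast this)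
      have : z₀ = ((-t / s : ℚ) : K) := by
        have hst' : (s : K) * z₀ + (t : K) = 0 := by
          simpa [Rat.smul_def] using hst
        have hsK : (s : K) ≠ 0 := by exact_mod_cast hs
        push_cast
        field_simp
        linear_combination hst'
      exact hq _ this
    have hcard : Fintype.card (Fin 2) = Module.finrank ℚ K := by simp [hquad]
    let B := basisOfLinearIndependentOfCardEqFinrank li hcard
    have hB : ∀ i, B i = ![z₀, 1] i := fun i => by
      simp [B, coe_basisOfLinearIndependentOfCardEqFinrank]
    apply hσ
    have hlin : σ.toLinearMap = (AlgEquiv.refl : K ≃ₐ[ℚ] K).toLinearMap := by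
      apply B.ext
      intro i
      fin_cases i <;> simp [hB 0, hB 1, hz]
    ext x
    have := LinearMap.congr_fun hlin x
    simpa using this
  · right
    have hz : σ z₀ = -z₀ - 1 := by linear_combination h2
    rw [hz]; linear_combination h
end
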